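/- arXiv:math/0210443 — 4 statements merged into one kernel-verified Lean document; each statement's English description precedes it below -/
import Mathlib

section
/- Let U be an n×n real orthogonal matrix (U * Uᵀ = 1), let m be even, let π be a pair partition of Fin m (a partition all of whose blocks have exactly two elements), and let g : Fin m → Fin n. Then the sum over all functions h : Fin m → Fin n that are constant on each block of π of the product ∏_{k : Fin m} U (g k) (h k) equals ∏ over blocks {a,b} of π of (if g a = g b then 1 else 0). -/
/-!
A function constant on the blocks of `π` is the same thing as a function on the set of blocks,
so the sum factorises into a product over the blocks `B` of `∑ j, ∏ k ∈ B, U (g k) j`. For a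
pair `B = {a, b}` this factor is the `(g a, g b)` entry of `U * Uᵀ = 1`.
-/

open Finset

namespace Finpartition

variable {ι : Type*} [DecidableEq ι]

theorem prod_parts_prod {M : Type*} [CommMonoid M] {s : Finset ι} (π : Finpartition s)
    (f : ι → M) : ∏ B ∈ π.parts, ∏ k ∈ B, f k = ∏ k ∈ s, f k := by
  simpa [π.biUnion_parts] using (prod_biUnion (f := f) π.disjoint).symm

variable [Fintype ι] (π : Finpartition (univ : Finset ι))

def partOf (k : ι) : π.parts := ⟨π.part k, π.part_mem.2 (mem_univ k)⟩

theorem sum_filter_constant_on_parts {κ M : Type*} [Fintype κ] [AddCommMonoid M]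
    [DecidablePred fun h : ι → κ => ∀ B ∈ π.parts, ∀ a ∈ B, ∀ b ∈ B, h a = h b] (F : (ι → κ) → M) :
    ∑ h with ∀ B ∈ π.parts, ∀ a ∈ B, ∀ b ∈ B, h a = h b, F h =
      ∑ φ : π.parts → κ, F (φ ∘ π.partOf) := by
  symm
  refine sum_nbij' (fun φ => φ ∘ π.partOf)
    (fun h B => h (π.nonempty_of_mem_parts B.2).choose) ?_ ?_ ?_ ?_ ?_
  · intro φ _
    simp only [mem_filter, mem_univ, true_and]
    intro B hB a ha b hb
    simp [partOf, π.part_eq_of_mem hB ha, π.part_eq_of_mem hB hb]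
  · simp
  · intro φ _
    funext B
    simp [partOf, π.part_eq_of_mem B.2 (π.nonempty_of_mem_parts B.2).choose_spec]
  · intro h hh
    simp only [mem_filter, mem_univ, true_and] at hh
    funext k
    have hpk := π.part_mem.2 (mem_univ k)
    exact hh _ hpk _ (π.nonempty_of_mem_parts hpk).choose_spec k (π.mem_part (mem_univ k))
  · simp

theorem sum_ite_constant_on_parts_prod {κ R : Type*} [Fintype κ] [CommSemiring R]
    [DecidablePred fun h : ι → κ => ∀ B ∈ π.parts, ∀ a ∈ B, ∀ b ∈ B, h a = h b] (f : ι → κ → R) :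
    ∑ h : ι → κ, (if ∀ B ∈ π.parts, ∀ a ∈ B, ∀ b ∈ B, h a = h b then ∏ k, f k (h k) else 0) =
      ∏ B ∈ π.parts, ∑ j, ∏ k ∈ B, f k j := by
  rw [← sum_filter, sum_filter_constant_on_parts, ← prod_coe_sort, Fintype.prod_sum]
  refine sum_congr rfl fun φ _ => ?_
  rw [← π.prod_parts_prod, ← prod_attach]
  refine prod_congr rfl fun B _ => prod_congr rfl fun k hk => ?_
  simp [partOf, π.part_eq_of_mem B.2 hk]

end Finpartition

namespace Matrix

variable {n R : Type*} [Fintype n] [DecidableEq n] {U : Matrix n n R}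

theorem sum_mul_eq_ite_of_mul_transpose_eq_one [Semiring R] (hU : U * Uᵀ = 1) (a b : n) :
    ∑ j, U a j * U b j = if a = b then 1 else 0 := by
  simpa [mul_apply, one_apply] using congrFun (congrFun hU a) b

theorem sum_prod_pair_eq_ite_of_mul_transpose_eq_one [CommSemiring R] {ι : Type*} [DecidableEq ι]
    (hU : U * Uᵀ = 1) (g : ι → n) {B : Finset ι} (hB : B.card = 2)
    [Decidable (∀ a ∈ B, ∀ b ∈ B, g a = g b)] :
    ∑ j, ∏ k ∈ B, U (g k) j = if ∀ a ∈ B, ∀ b ∈ B, g a = g b then 1 else 0 := by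
  obtain ⟨a, b, hab, rfl⟩ := card_eq_two.mp hB
  simp only [prod_pair hab, sum_mul_eq_ite_of_mul_transpose_eq_one hU, forall_mem_insert]
  grind

end Matrix

open scoped Classical in
theorem stmt2_general (n m : ℕ) (U : Matrix (Fin n) (Fin n) ℝ)
    (hU : U * U.transpose = 1)
    (π : Finpartition (Finset.univ : Finset (Fin m)))
    (hπ : ∀ B ∈ π.parts, B.card = 2) (g : Fin m → Fin n) :
    ∑ h : Fin m → Fin n,
      (if ∀ B ∈ π.parts, ∀ a ∈ B, ∀ b ∈ B, h a = h b
        then ∏ k, U (g k) (h k) else 0)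
    = ∏ B ∈ π.parts,
        (if ∀ a ∈ B, ∀ b ∈ B, g a = g b then (1 : ℝ) else 0) := by
  rw [π.sum_ite_constant_on_parts_prod fun k j => U (g k) j]
  exact prod_congr rfl fun B hB =>
    Matrix.sum_prod_pair_eq_ite_of_mul_transpose_eq_one hU g (hπ B hB)

open scoped Classical in
theorem stmt2 (n m : ℕ) (hm : Even m) (U : Matrix (Fin n) (Fin n) ℝ)
    (hU : U * U.transpose = 1)
    (π : Finpartition (Finset.univ : Finset (Fin m)))
    (hπ : ∀ B ∈ π.parts, B.card = 2) (g : Fin m → Fin n) :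
    ∑ h : Fin m → Fin n,
      (if ∀ B ∈ π.parts, ∀ a ∈ B, ∀ b ∈ B, h a = h b
        then ∏ k, U (g k) (h k) else 0)
    = ∏ B ∈ π.parts,
        (if ∀ a ∈ B, ∀ b ∈ B, g a = g b then (1 : ℝ) else 0) :=
  stmt2_general n m U hU π hπ g
end

section
/- Let n ≥ 1, let b : Fin n → ℝ be pairwise distinct nonzero real numbers, and let c : Fin n → ℝ. Suppose that for some m > n and for all real numbers α, β: ∑_j (α^m + β^m · (b j)^m) · c j = ∑_j (α + β · b j)^m · c j. Then c j = 0 for all j. -/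
open Polynomial in
theorem stmt9 (n : ℕ) (hn : 1 ≤ n) (b : Fin n → ℝ)
    (hb0 : ∀ j, b j ≠ 0) (hbinj : Function.Injective b)
    (c : Fin n → ℝ) (m : ℕ) (hm : n < m)
    (h : ∀ α β : ℝ,
      ∑ j, (α ^ m + β ^ m * (b j) ^ m) * c j = ∑ j, (α + β * b j) ^ m * c j) :
    ∀ j, c j = 0 := by
  have key : ∀ k : ℕ, 1 ≤ k → k ≤ n → ∑ j, b j ^ k * c j = 0 := by
    intro k hk1 hkn
    set p : ℝ[X] := ∑ j, C (c j) * (X + C (b j)) ^ m with hp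
    set q : ℝ[X] := C (∑ j, b j ^ m * c j) + C (∑ j, c j) * X ^ m with hq
    have hpq : p = q := by
      apply Polynomial.funext
      intro α
      have h1 := h α 1
      simp only [one_pow, one_mul] at h1
      simp only [hp, hq, eval_finset_sum, eval_mul, eval_pow, eval_add, eval_C, eval_X]
      rw [Finset.sum_congr rfl (fun (x : Fin n) (_ : x ∈ Finset.univ) =>
        mul_comm (c x) ((α + b x) ^ m)), ← h1]
      rw [Finset.sum_congr rfl (fun (j : Fin n) (_ : j ∈ Finset.univ) =>
        add_mul (α ^ m) ((b j) ^ m) (c j)), Finset.sum_add_distrib]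
      rw [Finset.sum_congr rfl (fun (j : Fin n) (_ : j ∈ Finset.univ) =>
        mul_comm (α ^ m) (c j)), ← Finset.sum_mul]
      ring
    have hcoeff := congrArg (fun r => r.coeff (m - k)) hpq
    simp only [hp, hq, finset_sum_coeff, coeff_C_mul, coeff_X_add_C_pow,
      coeff_add, coeff_C, coeff_X_pow] at hcoeff
    have h1 : m - k ≠ 0 := Nat.sub_ne_zero_of_lt (lt_of_le_of_lt hkn hm)
    have h2 : m - k ≠ m := by omega
    have h3 : m - (m - k) = k := by omega
    rw [if_neg h1, if_neg h2] at hcoeff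
    simp only [h3, mul_zero, add_zero, zero_add] at hcoeff
    have hch : (m.choose (m - k) : ℝ) ≠ 0 := by
      exact_mod_cast (Nat.choose_pos (show m - k ≤ m by omega)).ne'
    have : ∑ j, c j * b j ^ k * (m.choose (m - k) : ℝ) = 0 := by
      simpa [mul_assoc] using hcoeff
    rw [← Finset.sum_mul] at this
    have := (mul_eq_zero.mp this).resolve_right hch
    calc ∑ j, b j ^ k * c j = ∑ j, c j * b j ^ k := by
          exact Finset.sum_congr rfl fun j _ => mul_comm _ _
      _ = 0 := this
  -- Vandermonde step
  have hdet : (Matrix.transpose (Matrix.vandermonde b)).det ≠ 0 := by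
    rw [Matrix.det_transpose]
    exact Matrix.det_vandermonde_ne_zero_iff.mpr hbinj
  have hv : Matrix.mulVec (Matrix.transpose (Matrix.vandermonde b)) (fun j => b j * c j) = 0 := by
    funext k
    simp only [Matrix.mulVec, dotProduct, Matrix.transpose_apply,
      Matrix.vandermonde_apply, Pi.zero_apply]
    have := key ((k : ℕ) + 1) (by omega) (by omega)
    calc ∑ j, b j ^ (k : ℕ) * (b j * c j)
        = ∑ j, b j ^ ((k : ℕ) + 1) * c j := by
          refine Finset.sum_congr rfl fun j _ => ?_
          ring
      _ = 0 := this
  have hzero := Matrix.eq_zero_of_mulVec_eq_zero hdet hv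
  intro j
  have := congrFun hzero j
  simp only [Pi.zero_apply] at this
  exact (mul_eq_zero.mp this).resolve_left (hb0 j)
end

section
/- Let A and B be symmetric real n×n matrices. If 4 · trace(A² * B²) + 2 · trace(A * B * A * B) = 0, then A * B = 0. -/
theorem stmt12 (n : ℕ) (A B : Matrix (Fin n) (Fin n) ℝ)
    (hA : A.IsSymm) (hB : B.IsSymm)
    (h : 4 * Matrix.trace (A ^ 2 * B ^ 2) + 2 * Matrix.trace (A * B * A * B) = 0) :
    A * B = 0 := by
  set M := A * B with hMdef
  set x : ℝ := ∑ i, ∑ j, (M i j) ^ 2 with hxdef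
  set y : ℝ := ∑ i, ∑ j, M i j * M j i with hydef
  have htr1 : Matrix.trace (A ^ 2 * B ^ 2) = Matrix.trace (M.transpose * M) := by
    rw [hMdef, Matrix.transpose_mul, hA, hB,
      (show (B * A) * (A * B) = B * (A ^ 2 * B) by noncomm_ring),
      Matrix.trace_mul_comm B (A ^ 2 * B)]
    congr 1
    noncomm_ring
  have hx1 : Matrix.trace (M.transpose * M) = x := by
    rw [hxdef]
    simp only [Matrix.trace, Matrix.diag, Matrix.mul_apply, Matrix.transpose_apply]
    rw [Finset.sum_comm]
    apply Finset.sum_congr rfl; intro i _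
    apply Finset.sum_congr rfl; intro j _
    ring
  have hy1 : Matrix.trace (M * M) = y := by
    rw [hydef]
    simp only [Matrix.trace, Matrix.diag, Matrix.mul_apply]
  have h' : 4 * x + 2 * y = 0 := by
    rw [(show M * A * B = M * M by rw [hMdef]; noncomm_ring), htr1, hx1, hy1] at h
    exact h
  have hxnn : 0 ≤ x := by
    apply Finset.sum_nonneg; intro i _
    apply Finset.sum_nonneg; intro j _
    positivity
  have hxy : 0 ≤ x + y := by
    have h0 : (0:ℝ) ≤ ∑ i, ∑ j, (M i j + M j i) ^ 2 := by
      apply Finset.sum_nonneg; intro i _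
      apply Finset.sum_nonneg; intro j _
      positivity
    have hexp : ∑ i, ∑ j, (M i j + M j i) ^ 2 = 2 * x + 2 * y := by
      have hsym : ∑ i, ∑ j, (M j i) ^ 2 = x := by rw [hxdef, Finset.sum_comm]
      calc ∑ i, ∑ j, (M i j + M j i) ^ 2
          = ∑ i, ∑ j, ((M i j) ^ 2 + 2 * (M i j * M j i) + (M j i) ^ 2) := by
            apply Finset.sum_congr rfl; intro i _
            apply Finset.sum_congr rfl; intro j _
            ring
        _ = x + 2 * y + x := by
            simp only [Finset.sum_add_distrib, ← Finset.mul_sum]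
            rw [hsym, ← hxdef, ← hydef]
        _ = 2 * x + 2 * y := by ring
    linarith
  have hx0 : x = 0 := by linarith
  have hM0 : ∀ i j, M i j = 0 := by
    intro i j
    have hx0' : ∑ i, ∑ j, (M i j) ^ 2 = 0 := by rw [← hxdef]; exact hx0
    have hinner : ∀ i ∈ Finset.univ, ∑ j, (M i j) ^ 2 = 0 :=
      (Finset.sum_eq_zero_iff_of_nonneg (fun i _ =>
        Finset.sum_nonneg fun j _ => sq_nonneg _)).mp hx0'
    have h2 := (Finset.sum_eq_zero_iff_of_nonneg (fun j _ => sq_nonneg (M i j))).mp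
      (hinner i (Finset.mem_univ i)) j (Finset.mem_univ j)
    exact pow_eq_zero_iff (by norm_num) |>.mp h2
  ext i j
  rw [Matrix.zero_apply]
  exact hM0 i j
end

section
/- Let m ≥ 1 and let ρ₀ be the pair partition of Fin (2m) whose blocks are {2k, 2k+1} for k = 0, ..., m−1 (pairing consecutive elements). The number of pair partitions ρ of Fin (2m) such that the join ρ ∨ ρ₀ in the partition lattice is the one-block partition equals (m−1)! · 2^(m−1). -/
/-!
A pair partition `ρ` is the same as a fixed-point-free involution `f`, and `ρ₀` is the involution
`g` swapping `2k` and `2k + 1`; `ρ ∨ ρ₀ = ⊤` says that no nonempty proper set is stable under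
both `f` and `g`. Since `g` conjugates `f ∘ g` to its inverse, no cycle of `f ∘ g` contains both
points of a pair of `g`. When `f` is connected, the cycle of `f ∘ g` through any point `x`
therefore meets each of the `m` pairs exactly once, and `i ↦ (f ∘ g)^[i] x` is a map
`Fin m → Fin (2m)` hitting every pair once. Conversely each such map is the tour, from its first
point, of exactly one connected `f`, so the number `N` of connected `f` satisfies `N · 2m = m! · 2^m`.
-/

open Finset Function

namespace Finpartition

variable {α : Type*} [Fintype α] [DecidableEq α] {P Q : Finpartition (univ : Finset α)}

lemma part_subset_part_of_le (h : P ≤ Q) (x : α) : P.part x ⊆ Q.part x := by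
  obtain ⟨c, hc, hsub⟩ := h (P.part_mem.2 (mem_univ x))
  rw [← Q.part_eq_of_mem hc (hsub (P.mem_part (mem_univ x)))] at hsub
  exact hsub

lemma le_of_part_subset_part (h : ∀ x, P.part x ⊆ Q.part x) : P ≤ Q := by
  intro b hb
  obtain ⟨x, hx⟩ := P.nonempty_of_mem_parts hb
  exact ⟨Q.part x, Q.part_mem.2 (mem_univ x), P.part_eq_of_mem hb hx ▸ h x⟩

lemma ext_part (h : ∀ x, P.part x = Q.part x) : P = Q :=
  le_antisymm (le_of_part_subset_part fun x => (h x).le)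
    (le_of_part_subset_part fun x => (h x).ge)

lemma eq_top_iff_part_eq_univ (x : α) : P = ⊤ ↔ P.part x = univ := by
  constructor
  · rintro rfl
    exact mem_singleton.1 (parts_top_subset _ ((⊤ : Finpartition _).part_mem.2 (mem_univ x)))
  · intro h
    exact le_antisymm le_top fun b _ =>
      ⟨P.part x, P.part_mem.2 (mem_univ x), by rw [h]; exact subset_univ b⟩

lemma mem_part_comm {x y : α} : y ∈ P.part x ↔ x ∈ P.part y := by
  simp only [mem_part_iff_exists, and_comm]

theorem forall_le_eq_top_iff [Nonempty α] {ρ σ : Finpartition (univ : Finset α)} :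
    (∀ P : Finpartition (univ : Finset α), ρ ≤ P → σ ≤ P → P = ⊤) ↔
      ∀ s : Finset α, s.Nonempty → (∀ x ∈ s, ρ.part x ⊆ s ∧ σ.part x ⊆ s) → s = univ := by
  constructor
  · intro htop s ⟨x₀, hx₀⟩ hs
    let sides : Setoid α :=
      ⟨fun x y => (x ∈ s ↔ y ∈ s), ⟨fun _ => Iff.rfl, Iff.symm, Iff.trans⟩⟩
    have : DecidableRel sides.r := fun x y => inferInstanceAs (Decidable (x ∈ s ↔ y ∈ s))
    have mem_part_sides {x y} : y ∈ (ofSetoid sides).part x ↔ (x ∈ s ↔ y ∈ s) :=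
      mem_part_ofSetoid_iff_rel
    have le_sides {τ : Finpartition (univ : Finset α)} (hτ : ∀ x ∈ s, τ.part x ⊆ s) :
        τ ≤ ofSetoid sides := by
      refine le_of_part_subset_part fun x y hy => mem_part_sides.2 ⟨fun hx => hτ x hx hy, ?_⟩
      intro hy'
      exact hτ y hy' (mem_part_comm.1 hy)
    have := (eq_top_iff_part_eq_univ x₀).1
      (htop _ (le_sides fun x hx => (hs x hx).1) (le_sides fun x hx => (hs x hx).2))
    exact eq_univ_of_forall fun y => (mem_part_sides.1 (by rw [this]; exact mem_univ y)).1 hx₀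
  · intro hconn P hρ hσ
    obtain ⟨x₀⟩ := ‹Nonempty α›
    refine (eq_top_iff_part_eq_univ x₀).2
      (hconn _ ⟨x₀, P.mem_part (mem_univ x₀)⟩ fun x hx => ?_)
    rw [← P.part_eq_of_mem (P.part_mem.2 (mem_univ x₀)) hx]
    exact ⟨part_subset_part_of_le hρ x, part_subset_part_of_le hσ x⟩

end Finpartition

section Pairings

variable {α : Type*}

def IsPairing (f : α → α) : Prop := Involutive f ∧ ∀ x, f x ≠ x

lemma IsPairing.injective {f : α → α} (hf : IsPairing f) : Injective f := hf.1.injective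

def JointlyConnected [Fintype α] (f g : α → α) : Prop :=
  ∀ s : Finset α, s.Nonempty → (∀ x ∈ s, f x ∈ s ∧ g x ∈ s) → s = univ

variable [Fintype α] [DecidableEq α]

def pairSetoid {f : α → α} (hf : Involutive f) : Setoid α where
  r x y := y = x ∨ y = f x
  iseqv := by
    refine ⟨fun _ => Or.inl rfl, ?_, ?_⟩
    · rintro x y (rfl | rfl)
      · exact Or.inl rfl
      · exact Or.inr (hf x).symm
    · rintro x y z (rfl | rfl) (rfl | rfl)
      · exact Or.inl rfl
      · exact Or.inr rfl
      · exact Or.inr rfl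
      · exact Or.inl (hf x)

instance {f : α → α} (hf : Involutive f) : DecidableRel (pairSetoid hf).r :=
  fun x y => inferInstanceAs (Decidable (y = x ∨ y = f x))

def pairPartition {f : α → α} (hf : Involutive f) : Finpartition (univ : Finset α) :=
  Finpartition.ofSetoid (pairSetoid hf)

variable {f g : α → α}

lemma part_pairPartition (hf : Involutive f) (x : α) :
    (pairPartition hf).part x = {x, f x} := by
  ext y
  rw [pairPartition, Finpartition.mem_part_ofSetoid_iff_rel, mem_insert, mem_singleton]
  rfl

lemma card_eq_two_of_mem_parts_pairPartition (hf : IsPairing f) {B : Finset α}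
    (hB : B ∈ (pairPartition hf.1).parts) : B.card = 2 := by
  obtain ⟨x, hx⟩ := Finpartition.nonempty_of_mem_parts _ hB
  rw [← Finpartition.part_eq_of_mem _ hB hx, part_pairPartition, card_pair (hf.2 x).symm]

lemma eq_of_pairPartition_eq {f' : α → α} (hf : IsPairing f) (hf' : IsPairing f')
    (h : pairPartition hf.1 = pairPartition hf'.1) : f = f' := by
  funext x
  have hmem : f x ∈ (pairPartition hf'.1).part x := by
    rw [← h, part_pairPartition]; exact mem_insert_of_mem (mem_singleton_self _)
  rw [part_pairPartition, mem_insert, mem_singleton] at hmem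
  exact hmem.resolve_left (hf.2 x)

lemma exists_pairPartition_eq {ρ : Finpartition (univ : Finset α)}
    (hρ : ∀ B ∈ ρ.parts, B.card = 2) :
    ∃ (f : α → α) (hf : IsPairing f), pairPartition hf.1 = ρ := by
  have hpair (x : α) : ∃ y, y ≠ x ∧ ρ.part x = {x, y} := by
    obtain ⟨a, b, hab, hpart⟩ := card_eq_two.1 (hρ _ (ρ.part_mem.2 (mem_univ x)))
    have hx : x ∈ ρ.part x := ρ.mem_part (mem_univ x)
    rw [hpart, mem_insert, mem_singleton] at hx
    rcases hx with rfl | rfl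
    · exact ⟨b, hab.symm, hpart⟩
    · exact ⟨a, hab, hpart.trans (pair_comm _ _)⟩
  choose f hne hpart using hpair
  have hinv : Involutive f := by
    intro x
    have hfx : f x ∈ ρ.part x := by rw [hpart]; exact mem_insert_of_mem (mem_singleton_self _)
    have hffx : f (f x) ∈ ρ.part x := by
      rw [← ρ.part_eq_of_mem (ρ.part_mem.2 (mem_univ x)) hfx, hpart]
      exact mem_insert_of_mem (mem_singleton_self _)
    rw [hpart, mem_insert, mem_singleton] at hffx
    exact hffx.resolve_right (hne _)
  exact ⟨f, ⟨hinv, hne⟩, Finpartition.ext_part fun x => by rw [part_pairPartition, hpart]⟩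

lemma forall_le_eq_top_iff_jointlyConnected [Nonempty α] {ρ₀ : Finpartition (univ : Finset α)}
    (hρ₀ : ∀ x, ρ₀.part x = {x, g x}) (hf : Involutive f) :
    (∀ P, pairPartition hf ≤ P → ρ₀ ≤ P → P = ⊤) ↔ JointlyConnected f g := by
  rw [Finpartition.forall_le_eq_top_iff]
  refine forall₂_congr fun s _ => imp_congr_left (forall₂_congr fun x hx => ?_)
  simp only [part_pairPartition, hρ₀, insert_subset_iff, singleton_subset_iff, hx, true_and]

theorem ncard_pairPartitions_forall_le_eq_top [Nonempty α]
    {ρ₀ : Finpartition (univ : Finset α)} (hρ₀ : ∀ x, ρ₀.part x = {x, g x}) :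
    {ρ : Finpartition (univ : Finset α) | (∀ B ∈ ρ.parts, B.card = 2) ∧
        ∀ P : Finpartition (univ : Finset α), ρ ≤ P → ρ₀ ≤ P → P = ⊤}.ncard =
      Nat.card {f : α → α // IsPairing f ∧ JointlyConnected f g} := by
  rw [← Nat.card_coe_set_eq]
  symm
  refine Nat.card_congr (Equiv.ofBijective (fun f => ⟨pairPartition f.2.1.1,
    fun _ => card_eq_two_of_mem_parts_pairPartition f.2.1,
    (forall_le_eq_top_iff_jointlyConnected hρ₀ f.2.1.1).2 f.2.2⟩) ⟨?_, ?_⟩)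
  · intro f f' h
    exact Subtype.ext (eq_of_pairPartition_eq f.2.1 f'.2.1 (congrArg Subtype.val h))
  · rintro ⟨ρ, hρ, hjoin⟩
    obtain ⟨f, hf, rfl⟩ := exists_pairPartition_eq hρ
    exact ⟨⟨f, hf, (forall_le_eq_top_iff_jointlyConnected hρ₀ hf.1).1 hjoin⟩, rfl⟩

end Pairings

section Tours

variable {α : Type*} {f g : α → α} {m : ℕ}

/-- `g` conjugates `f ∘ g` to its inverse. -/
lemma iterate_comp_apply_iterate (hf : Involutive f) (hg : Involutive g) (n : ℕ) (y : α) :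
    (f ∘ g)^[n] (g ((f ∘ g)^[n] y)) = g y := by
  induction n generalizing y with
  | zero => rfl
  | succ n ih =>
    rw [iterate_succ_apply, iterate_succ_apply', comp_apply, comp_apply, hg, hf]
    exact ih y

/-- If `(f ∘ g)^[n] x = g x`, then `g` or `f` fixes the midpoint of the path from `x` to
`(f ∘ g)^[n] x`, depending on the parity of `n`. -/
lemma iterate_comp_ne_apply (hf : IsPairing f) (hg : IsPairing g) (n : ℕ) (x : α) :
    (f ∘ g)^[n] x ≠ g x := by
  intro h
  obtain ⟨t, rfl | rfl⟩ := Nat.even_or_odd' n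
  · apply hg.2 ((f ∘ g)^[t] x)
    have := iterate_comp_apply_iterate hf.1 hg.1 t ((f ∘ g)^[t] x)
    rw [← iterate_add_apply, ← two_mul, h, hg.1] at this
    exact this.symm
  · apply hf.2 ((f ∘ g)^[t + 1] x)
    have := iterate_comp_apply_iterate hf.1 hg.1 t ((f ∘ g)^[t + 1] x)
    rw [← iterate_add_apply, show t + (t + 1) = 2 * t + 1 by ring, h, hg.1] at this
    conv_rhs => rw [iterate_succ_apply', comp_apply, this, hg.1]

lemma iterate_comp_ne_apply_iterate (hf : IsPairing f) (hg : IsPairing g) (i j : ℕ) (x : α) :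
    (f ∘ g)^[i] x ≠ g ((f ∘ g)^[j] x) := by
  intro h
  apply iterate_comp_ne_apply hf hg (j + i) x
  rw [iterate_add_apply, h, iterate_comp_apply_iterate hf.1 hg.1]

lemma JointlyConnected.exists_iterate [Fintype α] (hf : IsPairing f) (hg : IsPairing g)
    (hfg : JointlyConnected f g) (x y : α) :
    ∃ k : ℕ, y = (f ∘ g)^[k] x ∨ y = g ((f ∘ g)^[k] x) := by
  classical
  have hr : 0 < minimalPeriod (f ∘ g) x :=
    minimalPeriod_pos_of_mem_periodicPts ((hf.injective.comp hg.injective).mem_periodicPts x)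
  have hs := hfg {y | ∃ k : ℕ, y = (f ∘ g)^[k] x ∨ y = g ((f ∘ g)^[k] x)}
    ⟨x, mem_filter.2 ⟨mem_univ x, 0, Or.inl rfl⟩⟩ (by
    simp only [mem_filter, mem_univ, true_and]
    rintro _ ⟨k, rfl | rfl⟩
    · refine ⟨⟨k + minimalPeriod (f ∘ g) x - 1, Or.inr ?_⟩, ⟨k, Or.inr rfl⟩⟩
      conv_lhs => rw [← iterate_add_minimalPeriod_eq,
        show k + minimalPeriod (f ∘ g) x = k + minimalPeriod (f ∘ g) x - 1 + 1 by omega,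
        iterate_succ_apply', comp_apply, hf.1]
    · exact ⟨⟨k + 1, Or.inl (by rw [iterate_succ_apply']; rfl)⟩, ⟨k, Or.inl (hg.1 _)⟩⟩)
  simpa using (eq_univ_iff_forall.1 hs) y

def PairInjective {ι : Type*} (g : α → α) (p : ι → α) : Prop :=
  Injective p ∧ ∀ i j, p i ≠ g (p j)

def withPartner {ι : Type*} (g : α → α) (p : ι → α) : ι × Bool → α :=
  fun ib => if ib.2 then g (p ib.1) else p ib.1

lemma PairInjective.injective_withPartner {ι : Type*} {p : ι → α} (hg : Involutive g)
    (hp : PairInjective g p) : Injective (withPartner g p) := by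
  rintro ⟨i, _ | _⟩ ⟨j, _ | _⟩ h <;> simp only [withPartner, Bool.false_eq_true, if_true,
    if_false] at h
  · rw [hp.1 h]
  · exact absurd h (hp.2 i j)
  · exact absurd h.symm (hp.2 j i)
  · rw [hp.1 (hg.injective h)]

lemma PairInjective.bijective_withPartner [Fintype α] {ι : Type*} [Fintype ι] {p : ι → α}
    (hg : Involutive g) (hp : PairInjective g p) (hcard : Fintype.card α = 2 * Fintype.card ι) :
    Bijective (withPartner g p) :=
  (Fintype.bijective_iff_injective_and_card _).2
    ⟨hp.injective_withPartner hg, by simp [hcard, mul_comm]⟩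

theorem JointlyConnected.minimalPeriod_comp [Fintype α] (hf : IsPairing f) (hg : IsPairing g)
    (hfg : JointlyConnected f g) (hcard : Fintype.card α = 2 * m) (x : α) :
    minimalPeriod (f ∘ g) x = m := by
  set r := minimalPeriod (f ∘ g) x
  have hr : 0 < r :=
    minimalPeriod_pos_of_mem_periodicPts ((hf.injective.comp hg.injective).mem_periodicPts x)
  let p : Fin r → α := fun k => (f ∘ g)^[k] x
  have hp : PairInjective g p :=
    ⟨fun i j h => Fin.ext (iterate_injOn_Iio_minimalPeriod i.2 j.2 h),
      fun i j => iterate_comp_ne_apply_iterate hf hg i j x⟩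
  have hsurj : Surjective (withPartner g p) := by
    intro y
    obtain ⟨k, hk | hk⟩ := hfg.exists_iterate hf hg x y
    · exact ⟨(⟨k % r, Nat.mod_lt _ hr⟩, false), by rw [hk]; exact iterate_mod_minimalPeriod_eq⟩
    · exact ⟨(⟨k % r, Nat.mod_lt _ hr⟩, true),
        by rw [hk]; exact congrArg g iterate_mod_minimalPeriod_eq⟩
  have hle := Fintype.card_le_of_injective _ (hp.injective_withPartner hg.1)
  have hge := Fintype.card_le_of_surjective _ hsurj
  simp only [Fintype.card_prod, Fintype.card_fin, Fintype.card_bool, hcard] at hle hge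
  omega

def tour (f g : α → α) (m : ℕ) (x : α) : Fin m → α := fun i => (f ∘ g)^[i] x

def IsTour [NeZero m] (f g : α → α) (p : Fin m → α) : Prop := ∀ i, f (g (p i)) = p (i + 1)

lemma JointlyConnected.pairInjective_tour [Fintype α] (hf : IsPairing f) (hg : IsPairing g)
    (hfg : JointlyConnected f g) (hcard : Fintype.card α = 2 * m) (x : α) :
    PairInjective g (tour f g m x) := by
  have hr := hfg.minimalPeriod_comp hf hg hcard x
  refine ⟨fun i j h => Fin.ext ?_, fun i j => iterate_comp_ne_apply_iterate hf hg i j x⟩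
  exact iterate_injOn_Iio_minimalPeriod (hr ▸ i.2 : (i : ℕ) < _) (hr ▸ j.2 : (j : ℕ) < _) h

lemma JointlyConnected.isTour_tour [Fintype α] [NeZero m] (hf : IsPairing f)
    (hg : IsPairing g) (hfg : JointlyConnected f g) (hcard : Fintype.card α = 2 * m) (x : α) :
    IsTour f g (tour f g m x) := by
  intro i
  have hmod := iterate_mod_minimalPeriod_eq (f := f ∘ g) (x := x) (n := i + 1)
  rw [hfg.minimalPeriod_comp hf hg hcard x] at hmod
  simp only [tour, Fin.val_add, Fin.val_one', Nat.add_mod_mod]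
  rw [hmod, iterate_succ_apply']
  rfl

variable [NeZero m] {p : Fin m → α}

open Fin.NatCast

lemma IsTour.apply_add_one (hf : Involutive f) (hp : IsTour f g p) (i : Fin m) :
    f (p (i + 1)) = g (p i) := by
  rw [← hp i, hf]

lemma IsTour.apply_add_natCast (hp : IsTour f g p) (i : Fin m) (k : ℕ) :
    p (i + (k : Fin m)) = (f ∘ g)^[k] (p i) := by
  induction k with
  | zero => simp
  | succ k ih => rw [Nat.cast_succ, ← add_assoc, ← hp, ih, iterate_succ_apply']; rfl

lemma IsTour.eq_of_apply_zero {q : Fin m → α} (hp : IsTour f g p) (hq : IsTour f g q)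
    (h : p 0 = q 0) : p = q := by
  funext i
  have hp' := hp.apply_add_natCast 0 i
  have hq' := hq.apply_add_natCast 0 i
  simp only [Fin.cast_val_eq_self, zero_add] at hp' hq'
  rw [hp', hq', h]

lemma IsTour.eq_of_surjective {f' : α → α} (hf : Involutive f) (hf' : Involutive f')
    (hsurj : Surjective (withPartner g p)) (hp : IsTour f g p) (hp' : IsTour f' g p) :
    f = f' := by
  funext y
  obtain ⟨⟨i, _ | _⟩, rfl⟩ := hsurj y
  · simp only [withPartner, Bool.false_eq_true, if_false]
    rw [← sub_add_cancel i 1, hp.apply_add_one hf, hp'.apply_add_one hf']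
  · simp only [withPartner, if_true]
    rw [hp i, hp' i]

lemma IsTour.jointlyConnected [Fintype α] (hg : Involutive g)
    (hsurj : Surjective (withPartner g p)) (hp : IsTour f g p) : JointlyConnected f g := by
  intro s ⟨y, hy⟩ hs
  obtain ⟨⟨i, b⟩, rfl⟩ := hsurj y
  have hi : p i ∈ s := by
    cases b
    · exact hy
    · simpa [withPartner, hg (p i)] using (hs _ hy).2
  have hall (j : Fin m) : p j ∈ s := by
    have (k : ℕ) : p (i + (k : Fin m)) ∈ s := by
      induction k with
      | zero => simpa using hi
      | succ k ih =>
        rw [Nat.cast_succ, ← add_assoc, ← hp]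
        exact (hs _ (hs _ ih).2).1
    simpa using this (j - i).val
  refine eq_univ_of_forall fun z => ?_
  obtain ⟨⟨j, _ | _⟩, rfl⟩ := hsurj z
  · exact hall j
  · exact (hs _ (hall j)).2

lemma PairInjective.exists_isTour [Fintype α] (hg : IsPairing g) (hp : PairInjective g p)
    (hcard : Fintype.card α = 2 * m) : ∃ f, IsPairing f ∧ IsTour f g p := by
  let e := Equiv.ofBijective _ (hp.bijective_withPartner hg.1 (by simpa using hcard))
  let step : Fin m × Bool → Fin m × Bool :=
    fun ib => if ib.2 then (ib.1 + 1, false) else (ib.1 - 1, true)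
  have hstep : Involutive step := by
    rintro ⟨i, _ | _⟩ <;> simp [step]
  have hstep_ne (z) : step z ≠ z := by
    rcases z with ⟨i, _ | _⟩ <;> simp [step]
  refine ⟨e ∘ step ∘ e.symm, ⟨fun y => by simp [hstep _], fun y h => ?_⟩, fun i => ?_⟩
  · exact hstep_ne (e.symm y) (by simpa using congrArg e.symm h)
  · have : g (p i) = e (i, true) := rfl
    rw [this, comp_apply, comp_apply, e.symm_apply_apply]
    rfl

theorem card_jointlyConnected_mul_card [Fintype α] (hg : IsPairing g)
    (hcard : Fintype.card α = 2 * m) :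
    Nat.card {f : α → α // IsPairing f ∧ JointlyConnected f g} * Fintype.card α =
      Nat.card {p : Fin m → α // PairInjective g p} := by
  rw [← Nat.card_eq_fintype_card, ← Nat.card_prod]
  refine Nat.card_congr (Equiv.ofBijective (fun fx => ⟨tour fx.1.1 g m fx.2,
    fx.1.2.2.pairInjective_tour fx.1.2.1 hg hcard fx.2⟩) ⟨?_, ?_⟩)
  · rintro ⟨⟨f, hf, hfg⟩, x⟩ ⟨⟨f', hf', hfg'⟩, x'⟩ h
    have htour : tour f g m x = tour f' g m x' := congrArg Subtype.val h
    have hx : x = x' := congrFun htour 0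
    have hsurj := ((hfg.pairInjective_tour hf hg hcard x).bijective_withPartner hg.1
      (by simpa using hcard)).2
    have hff' := (hfg.isTour_tour hf hg hcard x).eq_of_surjective hf.1 hf'.1 hsurj
      (htour ▸ hfg'.isTour_tour hf' hg hcard x')
    subst hx hff'
    rfl
  · rintro ⟨p, hp⟩
    obtain ⟨f, hf, htour⟩ := hp.exists_isTour hg hcard
    have hsurj := (hp.bijective_withPartner hg.1 (by simpa using hcard)).2
    have hfg := htour.jointlyConnected hg.1 hsurj
    exact ⟨⟨⟨f, hf, hfg⟩, p 0⟩,
      Subtype.ext ((hfg.isTour_tour hf hg hcard (p 0)).eq_of_apply_zero htour rfl)⟩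

end Tours

section ConsecutivePairs

variable {m : ℕ}

def half (x : Fin (2 * m)) : Fin m := ⟨x / 2, by omega⟩

def partner (x : Fin (2 * m)) : Fin (2 * m) :=
  ⟨x + 1 - 2 * (x % 2 : ℕ), by omega⟩

lemma half_eq_half_iff {x y : Fin (2 * m)} : half y = half x ↔ y = x ∨ y = partner x := by
  simp only [half, partner, Fin.ext_iff]
  omega

lemma isPairing_partner : IsPairing (partner : Fin (2 * m) → Fin (2 * m)) := by
  refine ⟨fun x => ?_, fun x h => ?_⟩ <;> simp only [partner, Fin.ext_iff] at * <;> omega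

lemma pairInjective_partner_iff {ι : Type*} {p : ι → Fin (2 * m)} :
    PairInjective partner p ↔ Injective (half ∘ p) := by
  refine ⟨fun hp i j h => ?_, fun hp => ⟨hp.of_comp, fun i j h => ?_⟩⟩
  · rcases half_eq_half_iff.1 h with h | h
    · exact hp.1 h
    · exact (hp.2 i j h).elim
  · have hij := hp (half_eq_half_iff.2 (Or.inr h))
    subst hij
    exact isPairing_partner.2 (p i) h.symm

def halfParityEquiv : Fin (2 * m) ≃ Fin m × Fin 2 where
  toFun x := (half x, ⟨x % 2, by omega⟩)
  invFun ib := ⟨2 * ib.1 + ib.2, by omega⟩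
  left_inv x := by ext; simp only [half]; omega
  right_inv ib := by ext <;> simp only [half] <;> omega

lemma card_pairInjective_partner :
    Nat.card {p : Fin m → Fin (2 * m) // PairInjective partner p} = m.factorial * 2 ^ m := by
  simp_rw [pairInjective_partner_iff]
  let e : {p : Fin m → Fin (2 * m) // Injective (half ∘ p)} ≃
      (Fin m ↪ Fin m) × (Fin m → Fin 2) :=
    (Equiv.subtypeEquiv ((Equiv.arrowCongr (Equiv.refl _) halfParityEquiv).trans
      (Equiv.arrowProdEquivProdArrow _ _ _)) fun _ => Iff.rfl).trans
    (Equiv.prodSubtypeFstEquivSubtypeProd.trans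
      (Equiv.prodCongr (Equiv.subtypeInjectiveEquivEmbedding _ _) (Equiv.refl _)))
  rw [Nat.card_congr e, Nat.card_eq_fintype_card, Fintype.card_prod, Fintype.card_embedding_eq,
    Fintype.card_fun, Fintype.card_fin, Fintype.card_fin, Nat.descFactorial_self]

end ConsecutivePairs

theorem stmt14 (m : ℕ) (hm : 1 ≤ m)
    (ρ₀ : Finpartition (Finset.univ : Finset (Fin (2 * m))))
    (hρ₀ : ∀ x y : Fin (2 * m),
      (∃ B ∈ ρ₀.parts, x ∈ B ∧ y ∈ B) ↔ (x : ℕ) / 2 = (y : ℕ) / 2) :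
    {ρ : Finpartition (Finset.univ : Finset (Fin (2 * m))) |
        (∀ B ∈ ρ.parts, B.card = 2) ∧
        ∀ P : Finpartition (Finset.univ : Finset (Fin (2 * m))),
          ρ ≤ P → ρ₀ ≤ P → P = ⊤}.ncard
      = Nat.factorial (m - 1) * 2 ^ (m - 1) := by
  have : NeZero m := ⟨by omega⟩
  have hpart (x : Fin (2 * m)) : ρ₀.part x = {x, partner x} := by
    ext y
    rw [Finpartition.mem_part_iff_exists, hρ₀, mem_insert, mem_singleton, ← half_eq_half_iff,
      half, half, Fin.mk.injEq]
  rw [ncard_pairPartitions_forall_le_eq_top hpart]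
  have hcount := card_jointlyConnected_mul_card isPairing_partner (Fintype.card_fin (2 * m))
  rw [card_pairInjective_partner, Fintype.card_fin] at hcount
  obtain ⟨n, rfl⟩ : ∃ n, m = n + 1 := ⟨m - 1, by omega⟩
  rw [Nat.factorial_succ, pow_succ] at hcount
  rw [add_tsub_cancel_right]
  exact Nat.eq_of_mul_eq_mul_right (by omega) (hcount.trans (by ring))
end
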